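/- arXiv:2404.19499 — 5 statements merged into one kernel-verified Lean document; each statement's English description precedes it below -/
import Mathlib

section
/- Let μ and ν be Borel probability measures on ℝ^d with finite p-th moment (p ∈ [1,∞)) that are absolutely continuous with respect to Lebesgue measure, with densities ℓ_μ and ℓ_ν. Then the p-th power of the Wasserstein distance satisfies W_p(μ,ν)^p ≤ max(1, 2^{p-1}) · ∫_{ℝ^d} |x|^p · |ℓ_μ(x) − ℓ_ν(x)| dx. -/
open MeasureTheory

/-- The `p`-Wasserstein distance, defined as the infimum over couplings of the `p`-th root of
the `p`-th cost. -/
noncomputable def Wp {d : ℕ} (p : ℝ)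
    (μ ν : Measure (EuclideanSpace ℝ (Fin d))) : ℝ :=
  sInf {c : ℝ | ∃ γ : Measure (EuclideanSpace ℝ (Fin d) × EuclideanSpace ℝ (Fin d)),
    IsProbabilityMeasure γ ∧ γ.map Prod.fst = μ ∧ γ.map Prod.snd = ν ∧
    c = (∫ z, ‖z.1 - z.2‖ ^ p ∂γ) ^ (1 / p)}

/-! The common mass `min ℓμ ℓν` stays in place at no cost, and the excess `(ℓμ - ℓν)⁺` is sent to
the deficit `(ℓν - ℓμ)⁺` by the normalised product coupling. On the latter,
`‖x - y‖ ^ p ≤ 2 ^ (p - 1) (‖x‖ ^ p + ‖y‖ ^ p)`, and integrating the right-hand side against a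
coupling only sees its marginals, whose densities add up to `|ℓμ - ℓν|`. -/

open Set
open scoped ENNReal

namespace MeasureTheory.Measure

variable {α : Type*} [MeasurableSpace α]

noncomputable def indepCoupling (μ ν : Measure α) : Measure (α × α) :=
  (μ univ)⁻¹ • μ.prod ν

/-- Leaves the common part `m` in place and couples the remainders `μ` and `ν` independently. -/
noncomputable def stayCoupling (m μ ν : Measure α) : Measure (α × α) :=
  m.map Function.diag + indepCoupling μ ν

variable {m μ ν : Measure α} [IsFiniteMeasure μ] [IsFiniteMeasure ν]

lemma map_fst_indepCoupling (h : μ univ = ν univ) : (indepCoupling μ ν).map Prod.fst = μ := by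
  rw [indepCoupling, Measure.map_smul, map_fst_prod, smul_smul, ← h]
  by_cases hμ : μ = 0
  · simp [hμ]
  · rw [ENNReal.inv_mul_cancel (measure_univ_ne_zero.2 hμ) (measure_ne_top _ _), one_smul]

lemma map_snd_indepCoupling (h : μ univ = ν univ) : (indepCoupling μ ν).map Prod.snd = ν := by
  rw [indepCoupling, Measure.map_smul, map_snd_prod, smul_smul]
  by_cases hμ : μ = 0
  · rw [hμ, measure_univ_eq_zero.1 (h.symm.trans (by simp [hμ]))]
    simp
  · rw [ENNReal.inv_mul_cancel (measure_univ_ne_zero.2 hμ) (measure_ne_top _ _), one_smul]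

lemma map_fst_stayCoupling (h : μ univ = ν univ) : (stayCoupling m μ ν).map Prod.fst = m + μ := by
  rw [stayCoupling, Measure.map_add _ _ measurable_fst, map_map measurable_fst measurable_diag,
    Function.fst_comp_diag, map_id, map_fst_indepCoupling h]

lemma map_snd_stayCoupling (h : μ univ = ν univ) : (stayCoupling m μ ν).map Prod.snd = m + ν := by
  rw [stayCoupling, Measure.map_add _ _ measurable_snd, map_map measurable_snd measurable_diag,
    Function.snd_comp_diag, map_id, map_snd_indepCoupling h]

lemma lintegral_stayCoupling_le {c : α × α → ℝ≥0∞} {w : α → ℝ≥0∞} (hc : Measurable c)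
    (hw : Measurable w) (hc_diag : ∀ x, c (x, x) = 0) (hcw : ∀ x y, c (x, y) ≤ w x + w y)
    (h : μ univ = ν univ) :
    ∫⁻ z, c z ∂stayCoupling m μ ν ≤ ∫⁻ x, w x ∂μ + ∫⁻ x, w x ∂ν := by
  have h_diag : ∫⁻ z, c z ∂m.map Function.diag = 0 := by
    simp [lintegral_map hc measurable_diag, Function.diag, hc_diag]
  rw [stayCoupling, lintegral_add_measure, h_diag, zero_add]
  calc ∫⁻ z, c z ∂indepCoupling μ ν
      ≤ ∫⁻ z, w z.1 + w z.2 ∂indepCoupling μ ν := lintegral_mono fun z => hcw z.1 z.2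
    _ = ∫⁻ x, w x ∂μ + ∫⁻ x, w x ∂ν := by
      rw [lintegral_add_left (f := fun z : α × α => w z.1) (hw.comp measurable_fst),
        ← lintegral_map hw measurable_fst, ← lintegral_map hw measurable_snd,
        map_fst_indepCoupling h, map_snd_indepCoupling h]

end MeasureTheory.Measure

namespace MeasureTheory

variable {α : Type*} [MeasurableSpace α]

lemma withDensity_min_add_withDensity_tsub (vol : Measure α) {f g : α → ℝ≥0∞}
    (hfg : Measurable fun x => f x - g x) :
    vol.withDensity (fun x => min (f x) (g x)) + vol.withDensity (fun x => f x - g x) =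
      vol.withDensity f := by
  rw [← withDensity_add_right _ hfg]
  congr with x
  exact (add_comm _ _).trans tsub_add_min

lemma lintegral_tsub_add_tsub_mul_le (vol : Measure α) {f g w : α → ℝ≥0∞} (hf : Measurable f)
    (hg : Measurable g) (hw : Measurable w) :
    ∫⁻ x, (f x - g x + (g x - f x)) * w x ∂vol ≤
      ∫⁻ x, w x ∂vol.withDensity f + ∫⁻ x, w x ∂vol.withDensity g := by
  rw [lintegral_withDensity_eq_lintegral_mul _ hf hw,
    lintegral_withDensity_eq_lintegral_mul _ hg hw, ← lintegral_add_left (hf.mul hw)]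
  refine lintegral_mono fun x => ?_
  simp only [Pi.mul_apply, ← add_mul]
  gcongr <;> exact tsub_le_self

theorem exists_coupling_lintegral_le_lintegral_tsub_add_tsub {vol μ ν : Measure α}
    [IsFiniteMeasure μ] (hmass : μ univ = ν univ) {f g : α → ℝ≥0∞} (hf : Measurable f)
    (hg : Measurable g) (hμ : μ = vol.withDensity f) (hν : ν = vol.withDensity g)
    {c : α × α → ℝ≥0∞} {w : α → ℝ≥0∞} (hc : Measurable c) (hw : Measurable w)
    (hc_diag : ∀ x, c (x, x) = 0) (hcw : ∀ x y, c (x, y) ≤ w x + w y) :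
    ∃ γ : Measure (α × α), γ.map Prod.fst = μ ∧ γ.map Prod.snd = ν ∧
      ∫⁻ z, c z ∂γ ≤ ∫⁻ x, (f x - g x + (g x - f x)) * w x ∂vol := by
  have hfg : Measurable fun x => f x - g x := hf.sub hg
  have hgf : Measurable fun x => g x - f x := hg.sub hf
  set m := vol.withDensity fun x => min (f x) (g x)
  set μ' := vol.withDensity fun x => f x - g x
  set ν' := vol.withDensity fun x => g x - f x
  have hμ_split : m + μ' = μ := hμ ▸ withDensity_min_add_withDensity_tsub vol hfg
  have hν_split : m + ν' = ν := by
    simp_rw [m, min_comm (f _)]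
    exact hν ▸ withDensity_min_add_withDensity_tsub vol hgf
  have : IsFiniteMeasure ν := ⟨hmass ▸ measure_lt_top μ univ⟩
  have : IsFiniteMeasure m := isFiniteMeasure_of_le μ (hμ_split ▸ Measure.le_add_right le_rfl)
  have : IsFiniteMeasure μ' := isFiniteMeasure_of_le μ (hμ_split ▸ Measure.le_add_left le_rfl)
  have : IsFiniteMeasure ν' := isFiniteMeasure_of_le ν (hν_split ▸ Measure.le_add_left le_rfl)
  have hmass' : μ' univ = ν' univ := by
    rw [← ENNReal.add_right_inj (measure_ne_top m univ), ← Measure.add_apply, ← Measure.add_apply,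
      hμ_split, hν_split, hmass]
  refine ⟨Measure.stayCoupling m μ' ν', hμ_split ▸ Measure.map_fst_stayCoupling hmass',
    hν_split ▸ Measure.map_snd_stayCoupling hmass', ?_⟩
  calc ∫⁻ z, c z ∂Measure.stayCoupling m μ' ν'
      ≤ ∫⁻ x, w x ∂μ' + ∫⁻ x, w x ∂ν' := Measure.lintegral_stayCoupling_le hc hw hc_diag hcw hmass'
    _ = ∫⁻ x, (f x - g x + (g x - f x)) * w x ∂vol := by
      rw [lintegral_withDensity_eq_lintegral_mul _ hfg hw,
        lintegral_withDensity_eq_lintegral_mul _ hgf hw, ← lintegral_add_left (hfg.mul hw)]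
      simp only [Pi.mul_apply, add_mul]

end MeasureTheory

lemma ENNReal.ofReal_tsub_add_ofReal_tsub {a b : ℝ} (ha : 0 ≤ a) (hb : 0 ≤ b) :
    ENNReal.ofReal a - ENNReal.ofReal b + (ENNReal.ofReal b - ENNReal.ofReal a) =
      ENNReal.ofReal |a - b| := by
  rw [← ENNReal.ofReal_sub _ hb, ← ENNReal.ofReal_sub _ ha]
  rcases le_total a b with h | h
  · rw [ENNReal.ofReal_of_nonpos (sub_nonpos.2 h), zero_add, abs_of_nonpos (sub_nonpos.2 h),
      neg_sub]
  · rw [ENNReal.ofReal_of_nonpos (sub_nonpos.2 h), add_zero, abs_of_nonneg (sub_nonneg.2 h)]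

lemma ENNReal.ofReal_norm_sub_rpow_le {E : Type*} [SeminormedAddCommGroup E] {p : ℝ}
    (hp : 1 ≤ p) (x y : E) :
    ENNReal.ofReal (‖x - y‖ ^ p) ≤
      2 ^ (p - 1) * (ENNReal.ofReal (‖x‖ ^ p) + ENNReal.ofReal (‖y‖ ^ p)) := by
  have hp0 : 0 ≤ p := zero_le_one.trans hp
  simp only [← ENNReal.ofReal_rpow_of_nonneg (norm_nonneg _) hp0]
  calc ENNReal.ofReal ‖x - y‖ ^ p ≤ (ENNReal.ofReal ‖x‖ + ENNReal.ofReal ‖y‖) ^ p := by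
        rw [← ENNReal.ofReal_add (norm_nonneg _) (norm_nonneg _)]
        gcongr
        exact norm_sub_le x y
    _ ≤ 2 ^ (p - 1) * (ENNReal.ofReal ‖x‖ ^ p + ENNReal.ofReal ‖y‖ ^ p) :=
        ENNReal.rpow_add_le_mul_rpow_add_rpow _ _ hp

lemma Wp_rpow_le_toReal_lintegral {d : ℕ} {p : ℝ} (hp : 0 < p)
    {μ ν : Measure (EuclideanSpace ℝ (Fin d))} [IsProbabilityMeasure μ]
    {γ : Measure (EuclideanSpace ℝ (Fin d) × EuclideanSpace ℝ (Fin d))}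
    (hγμ : γ.map Prod.fst = μ) (hγν : γ.map Prod.snd = ν) :
    Wp p μ ν ^ p ≤ (∫⁻ z, ENNReal.ofReal (‖z.1 - z.2‖ ^ p) ∂γ).toReal := by
  have : IsProbabilityMeasure (γ.map Prod.fst) := hγμ ▸ ‹_›
  have : IsProbabilityMeasure γ := Measure.isProbabilityMeasure_of_map Prod.fst
  have hcost_nonneg (γ' : Measure (EuclideanSpace ℝ (Fin d) × EuclideanSpace ℝ (Fin d))) :
      0 ≤ ∫ z, ‖z.1 - z.2‖ ^ p ∂γ' :=
    integral_nonneg fun z => Real.rpow_nonneg (norm_nonneg _) _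
  have hset_nonneg : ∀ c ∈ {c : ℝ | ∃ γ' : Measure _, IsProbabilityMeasure γ' ∧
      γ'.map Prod.fst = μ ∧ γ'.map Prod.snd = ν ∧ c = (∫ z, ‖z.1 - z.2‖ ^ p ∂γ') ^ (1 / p)},
      0 ≤ c := by
    rintro c ⟨γ', -, -, -, rfl⟩
    exact Real.rpow_nonneg (hcost_nonneg γ') _
  have hWp_le : Wp p μ ν ≤ (∫ z, ‖z.1 - z.2‖ ^ p ∂γ) ^ (1 / p) :=
    csInf_le ⟨0, hset_nonneg⟩ ⟨γ, ‹_›, hγμ, hγν, rfl⟩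
  rw [← integral_eq_lintegral_of_nonneg_ae
    (.of_forall fun z => Real.rpow_nonneg (norm_nonneg _) _) (by have := hp.le; fun_prop)]
  calc Wp p μ ν ^ p ≤ ((∫ z, ‖z.1 - z.2‖ ^ p ∂γ) ^ (1 / p)) ^ p :=
        Real.rpow_le_rpow (Real.sInf_nonneg hset_nonneg) hWp_le hp.le
    _ = ∫ z, ‖z.1 - z.2‖ ^ p ∂γ := by
        rw [← Real.rpow_mul (hcost_nonneg γ), one_div_mul_cancel hp.ne', Real.rpow_one]

theorem exists_coupling_lintegral_norm_sub_rpow_le {E : Type*} [NormedAddCommGroup E]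
    [MeasurableSpace E] [BorelSpace E] [SecondCountableTopology E] {p : ℝ} (hp : 1 ≤ p)
    {vol μ ν : Measure E} [IsFiniteMeasure μ] (hmass : μ univ = ν univ) {f g : E → ℝ≥0∞}
    (hf : Measurable f) (hg : Measurable g) (hμ : μ = vol.withDensity f)
    (hν : ν = vol.withDensity g) :
    ∃ γ : Measure (E × E), γ.map Prod.fst = μ ∧ γ.map Prod.snd = ν ∧
      ∫⁻ z, ENNReal.ofReal (‖z.1 - z.2‖ ^ p) ∂γ ≤
        2 ^ (p - 1) * ∫⁻ x, (f x - g x + (g x - f x)) * ENNReal.ofReal (‖x‖ ^ p) ∂vol := by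
  have hp0 : 0 < p := zero_lt_one.trans_le hp
  obtain ⟨γ, hγμ, hγν, hγ_cost⟩ := exists_coupling_lintegral_le_lintegral_tsub_add_tsub hmass hf hg
    hμ hν (c := fun z => ENNReal.ofReal (‖z.1 - z.2‖ ^ p))
    (w := fun x => 2 ^ (p - 1) * ENNReal.ofReal (‖x‖ ^ p)) (by fun_prop) (by fun_prop)
    (fun x => by simp [Real.zero_rpow hp0.ne'])
    (fun x y => (ENNReal.ofReal_norm_sub_rpow_le hp x y).trans_eq (mul_add _ _ _))
  refine ⟨γ, hγμ, hγν, ?_⟩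
  simpa only [mul_left_comm _ (2 ^ (p - 1) : ℝ≥0∞),
    lintegral_const_mul' _ _ (by simp : (2 : ℝ≥0∞) ^ (p - 1) ≠ ⊤)] using hγ_cost

theorem stmt0 (d : ℕ) (p : ℝ) (hp : 1 ≤ p)
    (μ ν : Measure (EuclideanSpace ℝ (Fin d)))
    [IsProbabilityMeasure μ] [IsProbabilityMeasure ν]
    (ℓμ ℓν : EuclideanSpace ℝ (Fin d) → ℝ)
    (hℓμ : Measurable ℓμ) (hℓν : Measurable ℓν)
    (hℓμ0 : ∀ x, 0 ≤ ℓμ x) (hℓν0 : ∀ x, 0 ≤ ℓν x)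
    (hμ : μ = volume.withDensity (fun x => ENNReal.ofReal (ℓμ x)))
    (hν : ν = volume.withDensity (fun x => ENNReal.ofReal (ℓν x)))
    (hmμ : ∫⁻ x, ENNReal.ofReal (‖x‖ ^ p) ∂μ ≠ ⊤)
    (hmν : ∫⁻ x, ENNReal.ofReal (‖x‖ ^ p) ∂ν ≠ ⊤) :
    Wp p μ ν ^ p ≤ max 1 (2 ^ (p - 1)) * ∫ x, ‖x‖ ^ p * |ℓμ x - ℓν x| := by
  set K := ∫⁻ x, ENNReal.ofReal (‖x‖ ^ p * |ℓμ x - ℓν x|)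
  have hK : ∫⁻ x, (ENNReal.ofReal (ℓμ x) - ENNReal.ofReal (ℓν x) +
      (ENNReal.ofReal (ℓν x) - ENNReal.ofReal (ℓμ x))) * ENNReal.ofReal (‖x‖ ^ p) = K := by
    refine lintegral_congr fun x => ?_
    rw [ENNReal.ofReal_tsub_add_ofReal_tsub (hℓμ0 x) (hℓν0 x), ← ENNReal.ofReal_mul (abs_nonneg _),
      mul_comm]
  have hK_ne_top : K ≠ ⊤ := by
    refine ne_top_of_le_ne_top (ENNReal.add_ne_top.2 ⟨hmμ, hmν⟩) ?_
    rw [← hK, hμ, hν]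
    exact lintegral_tsub_add_tsub_mul_le _ hℓμ.ennreal_ofReal hℓν.ennreal_ofReal (by fun_prop)
  have hK_toReal : K.toReal = ∫ x, ‖x‖ ^ p * |ℓμ x - ℓν x| := by
    rw [integral_eq_lintegral_of_nonneg_ae (.of_forall fun x => by positivity) (by fun_prop)]
  obtain ⟨γ, hγμ, hγν, hγ_cost⟩ := exists_coupling_lintegral_norm_sub_rpow_le hp (by simp)
    hℓμ.ennreal_ofReal hℓν.ennreal_ofReal hμ hν
  calc Wp p μ ν ^ p ≤ (∫⁻ z, ENNReal.ofReal (‖z.1 - z.2‖ ^ p) ∂γ).toReal :=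
        Wp_rpow_le_toReal_lintegral (by linarith) hγμ hγν
    _ ≤ (2 ^ (p - 1) * K).toReal := ENNReal.toReal_mono (by finiteness) (hK ▸ hγ_cost)
    _ = 2 ^ (p - 1) * ∫ x, ‖x‖ ^ p * |ℓμ x - ℓν x| := by
        rw [ENNReal.toReal_mul, ← ENNReal.toReal_rpow, hK_toReal, ENNReal.toReal_ofNat]
    _ ≤ max 1 (2 ^ (p - 1)) * ∫ x, ‖x‖ ^ p * |ℓμ x - ℓν x| := by
        gcongr
        exact le_max_right _ _
end

section
/- Let X be a random vector in ℝ^d whose law is bounded above by c·(p_t^{0,λ} * ν) for some constant c > 0, λ ∈ (0,1), t ∈ (0,T], where p_t^{0,λ}(x) = t^{−d/2} e^{−λ|x|²/t} and ν is a probability measure with finite p-th moment. Then for each p ∈ [1,∞) there exists a function φ : ℝ₊ → ℝ₊ with φ(R) → 0 as R → ∞ such that ∫_{|x|>R} |x|^p dμ_X(x) ≤ φ(R), uniformly over t ∈ (0,T]. -/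
/-!
The substitution `x = y + √t • w` turns `∫ f x * p_t(x - y) dx` into
`∫ f (y + √t • w) * exp (-λ‖w‖²) dw`, with no factor depending on `t`. Since
`s ↦ 1_{R < s} s ^ p` is monotone on `[0, ∞)` and `‖y + √t • w‖ ≤ ‖y‖ + √T ‖w‖` for `t ≤ T`,
the tail moment of `μ_X` beyond `R` is at most `c` times the tail moment of
`N (y, w) = ‖y‖ + √T ‖w‖` under the finite measure `ν ⊗ exp (-λ‖w‖²) dw`, uniformly in
`t ∈ (0, T]`. Under that measure `N` has a finite `p`-th moment, by those of `ν` and of the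
Gaussian, so its tail moments tend to `0`.
-/

open MeasureTheory Filter Real Module Set
open scoped ENNReal Topology

lemma rpow_le_rpow_mul_exp_sub {q x : ℝ} (hq : 0 < q) (hx : 0 ≤ x) :
    x ^ q ≤ q ^ q * exp (x - q) := by
  have hxq : x / q ≤ exp (x / q - 1) := by linarith [add_one_le_exp (x / q - 1)]
  calc x ^ q = q ^ q * (x / q) ^ q := by
        rw [← mul_rpow hq.le (by positivity), mul_div_cancel₀ _ hq.ne']
    _ ≤ q ^ q * exp (x / q - 1) ^ q := by gcongr
    _ = q ^ q * exp (x - q) := by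
        rw [← exp_mul]; congr 2; field_simp

lemma exists_rpow_mul_exp_neg_mul_sq_le {a p : ℝ} (ha : 0 < a) (hp : 0 < p) :
    ∃ C, ∀ s, 0 ≤ s → s ^ p * exp (-a * s ^ 2) ≤ C * exp (-(a / 2) * s ^ 2) := by
  refine ⟨(2 / a) ^ (p / 2) * (p / 2) ^ (p / 2), fun s hs => ?_⟩
  have hsp : s ^ p = (2 / a) ^ (p / 2) * (a / 2 * s ^ 2) ^ (p / 2) := by
    rw [← mul_rpow (by positivity) (by positivity), ← mul_assoc,
      div_mul_div_cancel₀ (by positivity), div_self two_ne_zero, one_mul, ← rpow_natCast,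
      ← rpow_mul hs]
    ring_nf
  calc s ^ p * exp (-a * s ^ 2)
      ≤ (2 / a) ^ (p / 2) * ((p / 2) ^ (p / 2) * exp (a / 2 * s ^ 2 - p / 2))
          * exp (-a * s ^ 2) := by
        rw [hsp]; gcongr; exact rpow_le_rpow_mul_exp_sub (by positivity) (by positivity)
    _ = (2 / a) ^ (p / 2) * (p / 2) ^ (p / 2) * exp (-(a / 2) * s ^ 2) * exp (-(p / 2)) := by
        rw [mul_assoc, mul_assoc, mul_assoc, ← exp_add, ← exp_add]; ring_nf
    _ ≤ (2 / a) ^ (p / 2) * (p / 2) ^ (p / 2) * exp (-(a / 2) * s ^ 2) := by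
        apply mul_le_of_le_one_right (by positivity)
        rw [exp_le_one_iff]; linarith

lemma ofReal_integral_le_lintegral_ofReal {α : Type*} [MeasurableSpace α] {μ : Measure α}
    {f : α → ℝ} (hf : ∀ x, 0 ≤ f x) :
    ENNReal.ofReal (∫ x, f x ∂μ) ≤ ∫⁻ x, ENNReal.ofReal (f x) ∂μ := by
  calc ENNReal.ofReal (∫ x, f x ∂μ) ≤ ‖∫ x, f x ∂μ‖ₑ := Real.ofReal_le_enorm _
    _ ≤ ∫⁻ x, ‖f x‖ₑ ∂μ := enorm_integral_le_lintegral_enorm f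
    _ = ∫⁻ x, ENNReal.ofReal (f x) ∂μ := by simp only [Real.enorm_of_nonneg (hf _)]

lemma lintegral_withDensity_le_of_le_convolution {G : Type*} [MeasurableSpace G] [AddGroup G]
    [MeasurableSub₂ G] {μ ν : Measure G} [SFinite μ] [SFinite ν] {ℓ k : G → ℝ} {F : G → ℝ≥0∞}
    {c : ℝ} (hℓ : Measurable ℓ) (hk : Measurable k) (hk0 : ∀ z, 0 ≤ k z) (hF : Measurable F)
    (hbound : ∀ x, ℓ x ≤ c * ∫ y, k (x - y) ∂ν) :
    ∫⁻ x, F x ∂μ.withDensity (fun x => ENNReal.ofReal (ℓ x))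
      ≤ ENNReal.ofReal c * ∫⁻ y, ∫⁻ x, ENNReal.ofReal (k (x - y)) * F x ∂μ ∂ν := by
  have hdens : ∀ x,
      ENNReal.ofReal (ℓ x) ≤ ENNReal.ofReal c * ∫⁻ y, ENNReal.ofReal (k (x - y)) ∂ν := fun x =>
    calc
      ENNReal.ofReal (ℓ x) ≤ ENNReal.ofReal c * ENNReal.ofReal (∫ y, k (x - y) ∂ν) := by
        rw [← ENNReal.ofReal_mul' (integral_nonneg fun y => hk0 _)]
        exact ENNReal.ofReal_le_ofReal (hbound x)
      _ ≤ _ := by gcongr; exact ofReal_integral_le_lintegral_ofReal fun y => hk0 _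
  calc ∫⁻ x, F x ∂μ.withDensity (fun x => ENNReal.ofReal (ℓ x))
      ≤ ∫⁻ x, ENNReal.ofReal (ℓ x) * F x ∂μ :=
        lintegral_withDensity_le_lintegral_mul μ hℓ.ennreal_ofReal F
    _ ≤ ∫⁻ x, ENNReal.ofReal c * ∫⁻ y, ENNReal.ofReal (k (x - y)) * F x ∂ν ∂μ := by
        refine lintegral_mono fun x => ?_
        rw [lintegral_mul_const _ (by fun_prop), ← mul_assoc]
        exact mul_le_mul_left (hdens x) _
    _ = _ := by
        rw [lintegral_const_mul' _ _ ENNReal.ofReal_ne_top, lintegral_lintegral_swap]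
        exact ((hk.comp measurable_sub).ennreal_ofReal.mul (hF.comp measurable_fst)).aemeasurable

lemma tendsto_setLIntegral_setOf_lt_atTop {α : Type*} [MeasurableSpace α] {m : Measure α}
    [IsFiniteMeasure m] {N : α → ℝ} (hN : Measurable N) {f : α → ℝ≥0∞}
    (hf : ∫⁻ x, f x ∂m ≠ ∞) :
    Tendsto (fun R : ℝ => ∫⁻ x in {x | R < N x}, f x ∂m) atTop (𝓝 0) := by
  refine tendsto_setLIntegral_zero hf ?_
  have hempty : ⋂ R : ℝ, {x | R < N x} = ∅ :=
    eq_empty_of_forall_notMem fun x hx => lt_irrefl (N x) (mem_iInter.1 hx (N x))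
  simpa [hempty] using tendsto_measure_iInter_atTop (μ := m)
    (fun R => (measurableSet_lt measurable_const hN).nullMeasurableSet)
    (fun R S hRS x (hx : S < N x) => (lt_of_le_of_lt hRS hx : R < N x))
    ⟨0, measure_ne_top _ _⟩

lemma monotoneOn_indicator_Ioi_rpow (R : ℝ) {p : ℝ} (hp : 0 ≤ p) :
    MonotoneOn ((Ioi R).indicator fun s : ℝ => ENNReal.ofReal (s ^ p)) (Ici 0) := by
  intro a ha b hb hab
  by_cases hRa : R < a
  · rw [indicator_of_mem (show a ∈ Ioi R from hRa),
      indicator_of_mem (show b ∈ Ioi R from hRa.trans_le hab)]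
    exact ENNReal.ofReal_le_ofReal (rpow_le_rpow ha hab hp)
  · rw [indicator_of_notMem (show a ∉ Ioi R from hRa)]
    exact bot_le

lemma lintegral_prod_add_rpow_ne_top {α β : Type*} [MeasurableSpace α] [MeasurableSpace β]
    {μ : Measure α} {ν : Measure β} [IsFiniteMeasure μ] [IsFiniteMeasure ν] {f : α → ℝ}
    {g : β → ℝ} {p : ℝ} (hp : 1 ≤ p) (hf0 : ∀ x, 0 ≤ f x) (hg0 : ∀ y, 0 ≤ g y)
    (hfm : Measurable f) (hgm : Measurable g) (hf : ∫⁻ x, ENNReal.ofReal (f x ^ p) ∂μ ≠ ∞)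
    (hg : ∫⁻ y, ENNReal.ofReal (g y ^ p) ∂ν ≠ ∞) :
    ∫⁻ z, ENNReal.ofReal ((f z.1 + g z.2) ^ p) ∂μ.prod ν ≠ ∞ := by
  have hp0 : 0 ≤ p := zero_le_one.trans hp
  have hsplit : ∀ a b : ℝ, 0 ≤ a → 0 ≤ b → ENNReal.ofReal ((a + b) ^ p)
      ≤ 2 ^ (p - 1) * (ENNReal.ofReal (a ^ p) + ENNReal.ofReal (b ^ p)) := by
    intro a b ha hb
    rw [← ENNReal.ofReal_rpow_of_nonneg (add_nonneg ha hb) hp0, ENNReal.ofReal_add ha hb,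
      ← ENNReal.ofReal_rpow_of_nonneg ha hp0, ← ENNReal.ofReal_rpow_of_nonneg hb hp0]
    exact ENNReal.rpow_add_le_mul_rpow_add_rpow _ _ hp
  refine ne_top_of_le_ne_top ?_ (lintegral_mono fun z => hsplit _ _ (hf0 z.1) (hg0 z.2))
  rw [lintegral_const_mul _ (by fun_prop), lintegral_add_left (by fun_prop),
    lintegral_prod _ (by fun_prop), lintegral_prod _ (by fun_prop)]
  simp only [lintegral_const]
  rw [lintegral_mul_const' _ _ (measure_ne_top _ _)]
  finiteness

/-- The kernel `p_t^{0,λ}`. -/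
noncomputable def heatKernel {E : Type*} [NormedAddCommGroup E] [Module ℝ E]
    (lam t : ℝ) (z : E) : ℝ :=
  t ^ (-(finrank ℝ E : ℝ) / 2) * exp (-lam * ‖z‖ ^ 2 / t)

section Scaling

variable {E : Type*} [NormedAddCommGroup E] [NormedSpace ℝ E] [FiniteDimensional ℝ E]
  [MeasurableSpace E] [BorelSpace E] (μ : Measure E) [μ.IsAddHaarMeasure]

lemma rpow_neg_half_eq_inv_sqrt_pow {t : ℝ} (ht : 0 ≤ t) (n : ℕ) :
    t ^ (-(n : ℝ) / 2) = (√t ^ n)⁻¹ := by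
  rw [sqrt_eq_rpow, ← rpow_natCast, ← rpow_mul ht, ← rpow_neg ht]
  ring_nf

lemma lintegral_heatKernel_sub_mul (lam : ℝ) {t : ℝ} (ht : 0 < t) (y : E) (F : E → ℝ≥0∞) :
    ∫⁻ x, ENNReal.ofReal (heatKernel lam t (x - y)) * F x ∂μ
      = ∫⁻ w, ENNReal.ofReal (exp (-lam * ‖w‖ ^ 2)) * F (y + √t • w) ∂μ := by
  have hs : √t ≠ 0 := (sqrt_pos.2 ht).ne'
  set H : E → ℝ≥0∞ := fun z => ENNReal.ofReal (heatKernel lam t z) * F (y + z)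
  have hH : ∀ w, H (√t • w) = ENNReal.ofReal (√t ^ finrank ℝ E)⁻¹ *
      (ENNReal.ofReal (exp (-lam * ‖w‖ ^ 2)) * F (y + √t • w)) := by
    intro w
    simp only [H, heatKernel, norm_smul, mul_pow, norm_eq_abs, abs_of_pos (sqrt_pos.2 ht),
      sq_sqrt ht.le]
    rw [ENNReal.ofReal_mul (by positivity), mul_assoc, rpow_neg_half_eq_inv_sqrt_pow ht.le]
    congr 4
    field_simp
  have hscale : ∫⁻ w, H (√t • w) ∂μ = ENNReal.ofReal (√t ^ finrank ℝ E)⁻¹ * ∫⁻ z, H z ∂μ := by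
    calc ∫⁻ w, H (√t • w) ∂μ = ∫⁻ z, H z ∂(μ.map (√t • ·)) :=
          (lintegral_map_equiv H (MeasurableEquiv.smul₀ √t hs)).symm
      _ = _ := by
          rw [Measure.map_addHaar_smul μ hs, lintegral_smul_measure, abs_of_pos (by positivity)]
          rfl
  calc ∫⁻ x, ENNReal.ofReal (heatKernel lam t (x - y)) * F x ∂μ
      = ∫⁻ z, H z ∂μ := by
        rw [← lintegral_add_left_eq_self _ y]
        simp only [H, add_sub_cancel_left]
    _ = _ := by
        refine (ENNReal.mul_right_inj (a := ENNReal.ofReal (√t ^ finrank ℝ E)⁻¹)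
          (ENNReal.ofReal_pos.2 (by positivity)).ne' ENNReal.ofReal_ne_top).1 ?_
        rw [← hscale, ← lintegral_const_mul' _ _ ENNReal.ofReal_ne_top]
        simp only [hH]

end Scaling

section InnerProductSpace

variable {V : Type*} [NormedAddCommGroup V] [InnerProductSpace ℝ V] [FiniteDimensional ℝ V]
  [MeasurableSpace V] [BorelSpace V] {a : ℝ}

lemma integrable_exp_neg_mul_sq_norm (ha : 0 < a) :
    Integrable fun v : V => exp (-a * ‖v‖ ^ 2) :=
  Integrable.of_integral_ne_zero <| by
    rw [GaussianFourier.integral_rexp_neg_mul_sq_norm ha]; positivity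

noncomputable def gaussMeasure (a : ℝ) : Measure V :=
  volume.withDensity fun v => ENNReal.ofReal (exp (-a * ‖v‖ ^ 2))

instance (a : ℝ) : SFinite (gaussMeasure a : Measure V) := by
  unfold gaussMeasure; infer_instance

lemma isFiniteMeasure_gaussMeasure (ha : 0 < a) :
    IsFiniteMeasure (gaussMeasure a : Measure V) :=
  isFiniteMeasure_withDensity_ofReal (integrable_exp_neg_mul_sq_norm ha).hasFiniteIntegral

lemma lintegral_norm_rpow_gaussMeasure_ne_top (ha : 0 < a) {p : ℝ} (hp : 0 < p) :
    ∫⁻ v, ENNReal.ofReal (‖v‖ ^ p) ∂(gaussMeasure a : Measure V) ≠ ∞ := by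
  obtain ⟨C, hC⟩ := exists_rpow_mul_exp_neg_mul_sq_le ha hp
  rw [gaussMeasure, lintegral_withDensity_eq_lintegral_mul _ (by fun_prop) (by fun_prop)]
  refine ne_top_of_le_ne_top
    ((integrable_exp_neg_mul_sq_norm (V := V) (half_pos ha)).const_mul C).lintegral_lt_top.ne
    (lintegral_mono fun v => ?_)
  rw [Pi.mul_apply, ← ENNReal.ofReal_mul (by positivity), mul_comm]
  exact ENNReal.ofReal_le_ofReal (hC _ (norm_nonneg v))

lemma setLIntegral_norm_rpow_withDensity_le {ν : Measure V} [SFinite ν] {ℓ : V → ℝ}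
    {lam c p t T : ℝ} (hp : 0 ≤ p) (ht : 0 < t) (htT : t ≤ T) (hℓ : Measurable ℓ)
    (hbound : ∀ x, ℓ x ≤ c * ∫ y, heatKernel lam t (x - y) ∂ν) (R : ℝ) :
    ∫⁻ x in {x | R < ‖x‖}, ENNReal.ofReal (‖x‖ ^ p)
        ∂volume.withDensity (fun x => ENNReal.ofReal (ℓ x))
      ≤ ENNReal.ofReal c * ∫⁻ q in {q : V × V | R < ‖q.1‖ + √T * ‖q.2‖},
          ENNReal.ofReal ((‖q.1‖ + √T * ‖q.2‖) ^ p) ∂ν.prod (gaussMeasure lam) := by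
  set h : ℝ → ℝ≥0∞ := (Ioi R).indicator fun s => ENNReal.ofReal (s ^ p)
  have hh : Measurable h :=
    (measurable_id.pow_const p).ennreal_ofReal.indicator measurableSet_Ioi
  have key : ∀ y w : V, h ‖y + √t • w‖ ≤ h (‖y‖ + √T * ‖w‖) := fun y w =>
    monotoneOn_indicator_Ioi_rpow R hp (norm_nonneg _) (mem_Ici.2 (by positivity)) <| by
      grw [norm_add_le, norm_smul, norm_of_nonneg (sqrt_nonneg t), htT]
  calc ∫⁻ x in {x | R < ‖x‖}, ENNReal.ofReal (‖x‖ ^ p)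
        ∂volume.withDensity (fun x => ENNReal.ofReal (ℓ x))
      = ∫⁻ x, h ‖x‖ ∂volume.withDensity (fun x => ENNReal.ofReal (ℓ x)) := by
        rw [← lintegral_indicator (measurableSet_lt measurable_const measurable_norm)]
        rfl
    _ ≤ ENNReal.ofReal c * ∫⁻ y, ∫⁻ x,
          ENNReal.ofReal (heatKernel lam t (x - y)) * h ‖x‖ ∂volume ∂ν :=
        lintegral_withDensity_le_of_le_convolution hℓ (by unfold heatKernel; fun_prop)
          (fun z => by unfold heatKernel; positivity) (hh.comp measurable_norm) hbound
    _ = ENNReal.ofReal c * ∫⁻ y, ∫⁻ w,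
          ENNReal.ofReal (exp (-lam * ‖w‖ ^ 2)) * h ‖y + √t • w‖ ∂volume ∂ν := by
        simp_rw [lintegral_heatKernel_sub_mul volume lam ht]
    _ ≤ ENNReal.ofReal c * ∫⁻ y, ∫⁻ w,
          ENNReal.ofReal (exp (-lam * ‖w‖ ^ 2)) * h (‖y‖ + √T * ‖w‖) ∂volume ∂ν := by
        gcongr with y w
        exact key y w
    _ = _ := by
        have hS : MeasurableSet {q : V × V | R < ‖q.1‖ + √T * ‖q.2‖} :=
          measurableSet_lt measurable_const (by fun_prop)
        rw [← lintegral_indicator hS]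
        change _ = _ * ∫⁻ q : V × V, h (‖q.1‖ + √T * ‖q.2‖) ∂_
        rw [lintegral_prod _ (by fun_prop)]
        congr 1
        refine lintegral_congr fun y => ?_
        rw [gaussMeasure, lintegral_withDensity_eq_lintegral_mul _ (by fun_prop) (by fun_prop)]
        rfl

end InnerProductSpace

theorem stmt7_general (d : ℕ) (T lam c p : ℝ) (hlam : 0 < lam)
    (hp : 1 ≤ p)
    (ν : Measure (EuclideanSpace ℝ (Fin d))) [IsProbabilityMeasure ν]
    (hν : ∫⁻ y, ENNReal.ofReal (‖y‖ ^ p) ∂ν ≠ ⊤)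
    (μ : ℝ → Measure (EuclideanSpace ℝ (Fin d)))
    (ℓ : ℝ → EuclideanSpace ℝ (Fin d) → ℝ)
    (hmeas : ∀ t ∈ Set.Ioc 0 T, Measurable (ℓ t))
    (hdens : ∀ t ∈ Set.Ioc 0 T,
      μ t = volume.withDensity (fun x => ENNReal.ofReal (ℓ t x)))
    (hbound : ∀ t ∈ Set.Ioc 0 T, ∀ x, ℓ t x ≤
      c * ∫ y, t ^ (-(d : ℝ) / 2) * Real.exp (-lam * ‖x - y‖ ^ 2 / t) ∂ν) :
    ∃ φ : ℝ → ℝ, (∀ R, 0 ≤ φ R) ∧ Tendsto φ atTop (nhds 0) ∧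
      ∀ R ≥ (0 : ℝ), ∀ t ∈ Set.Ioc 0 T,
        (∫ x in {x | R < ‖x‖}, ‖x‖ ^ p ∂(μ t)) ≤ φ R := by
  have hp0 : 0 < p := zero_lt_one.trans_le hp
  have := isFiniteMeasure_gaussMeasure (V := EuclideanSpace ℝ (Fin d)) hlam
  set N : EuclideanSpace ℝ (Fin d) × EuclideanSpace ℝ (Fin d) → ℝ :=
    fun q => ‖q.1‖ + √T * ‖q.2‖
  have hmoment : ∫⁻ q, ENNReal.ofReal (N q ^ p) ∂ν.prod (gaussMeasure lam) ≠ ∞ := by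
    refine lintegral_prod_add_rpow_ne_top hp (fun _ => norm_nonneg _) (fun _ => by positivity)
      measurable_norm (measurable_norm.const_mul _) hν ?_
    simp_rw [mul_rpow (sqrt_nonneg T) (norm_nonneg _),
      ENNReal.ofReal_mul (by positivity : 0 ≤ √T ^ p)]
    rw [lintegral_const_mul' _ _ ENNReal.ofReal_ne_top]
    exact ENNReal.mul_ne_top ENNReal.ofReal_ne_top
      (lintegral_norm_rpow_gaussMeasure_ne_top hlam hp0)
  set Ψ : ℝ → ℝ≥0∞ := fun R =>
    ENNReal.ofReal c *
      ∫⁻ q in {q | R < N q}, ENNReal.ofReal (N q ^ p) ∂ν.prod (gaussMeasure lam)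
  have hΨ : Tendsto Ψ atTop (𝓝 0) := by
    simpa using ENNReal.Tendsto.const_mul
      (tendsto_setLIntegral_setOf_lt_atTop (by fun_prop) hmoment) (Or.inr ENNReal.ofReal_ne_top)
  have hΨ_ne_top : ∀ R, Ψ R ≠ ∞ := fun R => ENNReal.mul_ne_top ENNReal.ofReal_ne_top
    (ne_top_of_le_ne_top hmoment (setLIntegral_le_lintegral _ _))
  refine ⟨fun R => (Ψ R).toReal, fun R => ENNReal.toReal_nonneg, ?_, fun R _ t ht => ?_⟩
  · exact ENNReal.toReal_zero ▸ (ENNReal.tendsto_toReal ENNReal.zero_ne_top).comp hΨ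
  · have hbound' : ∀ x, ℓ t x ≤ c * ∫ y, heatKernel lam t (x - y) ∂ν := by
      simpa [heatKernel, finrank_euclideanSpace_fin] using hbound t ht
    rw [hdens t ht, integral_eq_lintegral_of_nonneg_ae (Eventually.of_forall fun x => by positivity)
      (measurable_norm.pow_const p).aestronglyMeasurable]
    exact ENNReal.toReal_mono (hΨ_ne_top R)
      (setLIntegral_norm_rpow_withDensity_le hp0.le ht.1 ht.2 (hmeas t ht) hbound' R)

theorem stmt7 (d : ℕ) (T lam c p : ℝ) (hT : 0 < T) (hlam : 0 < lam) (hlam1 : lam < 1)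
    (hc : 0 < c) (hp : 1 ≤ p)
    (ν : Measure (EuclideanSpace ℝ (Fin d))) [IsProbabilityMeasure ν]
    (hν : ∫⁻ y, ENNReal.ofReal (‖y‖ ^ p) ∂ν ≠ ⊤)
    (μ : ℝ → Measure (EuclideanSpace ℝ (Fin d)))
    (hprob : ∀ t ∈ Set.Ioc 0 T, IsProbabilityMeasure (μ t))
    (ℓ : ℝ → EuclideanSpace ℝ (Fin d) → ℝ)
    (hmeas : ∀ t ∈ Set.Ioc 0 T, Measurable (ℓ t))
    (hdens : ∀ t ∈ Set.Ioc 0 T,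
      μ t = volume.withDensity (fun x => ENNReal.ofReal (ℓ t x)))
    (hbound : ∀ t ∈ Set.Ioc 0 T, ∀ x, ℓ t x ≤
      c * ∫ y, t ^ (-(d : ℝ) / 2) * Real.exp (-lam * ‖x - y‖ ^ 2 / t) ∂ν) :
    ∃ φ : ℝ → ℝ, (∀ R, 0 ≤ φ R) ∧ Tendsto φ atTop (nhds 0) ∧
      ∀ R ≥ (0 : ℝ), ∀ t ∈ Set.Ioc 0 T,
        (∫ x in {x | R < ‖x‖}, ‖x‖ ^ p ∂(μ t)) ≤ φ R :=
  stmt7_general d T lam c p hlam hp ν hν μ ℓ hmeas hdens hbound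
end

section
/- Let f : [0,T] → ℝ₊ be bounded measurable and suppose there exist constants A, B ≥ 0 such that f(t) ≤ A + B ∫₀ᵗ (T−s)^{−1/2} f(s) ds for all t ∈ [0,T]. Then sup_{t∈[0,T]} f(t) ≤ A · exp(2B√T). -/
/-!
Picard iteration. The kernel `k s = (T - s) ^ (-1/2)` has the primitive `W t = 2√T - 2√(T - t)`,
which vanishes at `0` and is at most `2√T`. Since `A eˣ + M xⁿ⁺¹/(n+1)!` is a primitive of
`A eˣ + M xⁿ/n!`, feeding the bound `f ≤ A e^{BW} + M (BW)ⁿ/n!` into the integral inequality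
returns it with `n + 1`; starting from `f ≤ M` and letting `n → ∞` gives `f ≤ A e^{BW}`.
-/

open MeasureTheory intervalIntegral Set Real Filter Topology Nat

theorem IntervalIntegrable.mul_of_abs_le {k g : ℝ → ℝ} {a b C : ℝ}
    (hk : IntervalIntegrable k volume a b) (hg : Measurable g) (hgC : ∀ x ∈ uIoc a b, |g x| ≤ C) :
    IntervalIntegrable (fun x => k x * g x) volume a b := by
  rw [intervalIntegrable_iff] at hk ⊢
  exact hk.mul_bdd hg.aestronglyMeasurable ((ae_restrict_iff' measurableSet_uIoc).2
    (Eventually.of_forall hgC))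

noncomputable def gronwallIterate (A M : ℝ) (n : ℕ) (x : ℝ) : ℝ := A * exp x + M * x ^ n / n !

theorem continuous_gronwallIterate (A M : ℝ) (n : ℕ) : Continuous (gronwallIterate A M n) := by
  unfold gronwallIterate; fun_prop

theorem gronwallIterate_succ_zero (A M : ℝ) (n : ℕ) : gronwallIterate A M (n + 1) 0 = A := by
  simp [gronwallIterate]

theorem hasDerivAt_gronwallIterate (A M : ℝ) (n : ℕ) (x : ℝ) :
    HasDerivAt (gronwallIterate A M (n + 1)) (gronwallIterate A M n x) x := by
  have hpow : HasDerivAt (fun x : ℝ => x ^ (n + 1) / (n + 1)!) (x ^ n / n !) x := by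
    refine ((hasDerivAt_pow (n + 1) x).div_const ((n + 1)! : ℝ)).congr_deriv ?_
    rw [Nat.factorial_succ, Nat.cast_mul]
    field_simp
    push_cast
    ring
  unfold gronwallIterate
  simpa only [mul_div_assoc] using ((hasDerivAt_exp x).const_mul A).fun_add (hpow.const_mul M)

theorem tendsto_gronwallIterate (A M x : ℝ) :
    Tendsto (fun n => gronwallIterate A M n x) atTop (𝓝 (A * exp x)) := by
  simpa [gronwallIterate, mul_div_assoc] using
    ((FloorSemiring.tendsto_pow_div_factorial_atTop x).const_mul M).const_add (A * exp x)

section KernelGronwall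

variable {k W f : ℝ → ℝ} {T A B M : ℝ}

theorem add_mul_integral_mul_gronwallIterate {t : ℝ} (ht : 0 ≤ t)
    (hki : IntervalIntegrable k volume 0 t) (hWc : ContinuousOn W (Icc 0 t)) (hW0 : W 0 = 0)
    (hWk : ∀ s ∈ Ioo 0 t, HasDerivAt W (k s) s) (n : ℕ) :
    A + B * ∫ s in (0)..t, k s * gronwallIterate A M n (B * W s) =
      gronwallIterate A M (n + 1) (B * W t) := by
  have hderiv : ∀ s ∈ Ioo 0 t, HasDerivAt (fun s => gronwallIterate A M (n + 1) (B * W s))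
      (gronwallIterate A M n (B * W s) * (B * k s)) s := fun s hs =>
    (hasDerivAt_gronwallIterate A M n _).comp s ((hWk s hs).const_mul B)
  have hint : IntervalIntegrable (fun s => gronwallIterate A M n (B * W s) * (B * k s)) volume 0 t :=
    (hki.const_mul B).continuousOn_mul ((continuous_gronwallIterate A M n).comp_continuousOn
      (continuousOn_const.mul (uIcc_of_le ht ▸ hWc)))
  have hFTC := integral_eq_sub_of_hasDerivAt_of_le
    (f := fun s => gronwallIterate A M (n + 1) (B * W s)) ht
    ((continuous_gronwallIterate A M (n + 1)).comp_continuousOn (continuousOn_const.mul hWc))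
    hderiv hint
  calc A + B * ∫ s in (0)..t, k s * gronwallIterate A M n (B * W s)
      = A + ∫ s in (0)..t, gronwallIterate A M n (B * W s) * (B * k s) := by
        rw [← intervalIntegral.integral_const_mul]
        exact congrArg _ (integral_congr fun s _ => by ring)
    _ = gronwallIterate A M (n + 1) (B * W t) := by
        simp [hFTC, hW0, gronwallIterate_succ_zero]

theorem le_gronwallIterate (hA : 0 ≤ A) (hk : ∀ s ∈ Icc 0 T, 0 ≤ k s)
    (hki : IntervalIntegrable k volume 0 T) (hWc : ContinuousOn W (Icc 0 T)) (hW0 : W 0 = 0)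
    (hWk : ∀ s ∈ Ioo 0 T, HasDerivAt W (k s) s) (hB : 0 ≤ B) (hf : Measurable f)
    (hf0 : ∀ t ∈ Icc 0 T, 0 ≤ f t) (hfM : ∀ t ∈ Icc 0 T, f t ≤ M)
    (hineq : ∀ t ∈ Icc 0 T, f t ≤ A + B * ∫ s in (0)..t, k s * f s) (n : ℕ) :
    ∀ t ∈ Icc 0 T, f t ≤ gronwallIterate A M n (B * W t) := by
  induction n with
  | zero =>
    intro t ht
    simpa [gronwallIterate] using add_le_add (by positivity : 0 ≤ A * exp (B * W t)) (hfM t ht)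
  | succ n ih =>
    intro t ht
    have hsub : Icc 0 t ⊆ Icc 0 T := Icc_subset_Icc_right ht.2
    have hkt : IntervalIntegrable k volume 0 t := hki.mono_set (by
      rw [uIcc_of_le ht.1, uIcc_of_le (ht.1.trans ht.2)]; exact hsub)
    have hkf : IntervalIntegrable (fun s => k s * f s) volume 0 t := by
      refine hkt.mul_of_abs_le (C := M) hf fun s hs => ?_
      have hsT : s ∈ Icc 0 T := hsub (Ioc_subset_Icc_self (uIoc_of_le ht.1 ▸ hs))
      exact (abs_of_nonneg (hf0 s hsT)).symm ▸ hfM s hsT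
    have hkG : IntervalIntegrable (fun s => k s * gronwallIterate A M n (B * W s)) volume 0 t :=
      hkt.mul_continuousOn ((continuous_gronwallIterate A M n).comp_continuousOn
        (continuousOn_const.mul (uIcc_of_le ht.1 ▸ hWc.mono hsub)))
    calc f t ≤ A + B * ∫ s in (0)..t, k s * f s := hineq t ht
      _ ≤ A + B * ∫ s in (0)..t, k s * gronwallIterate A M n (B * W s) := by
        gcongr
        exact integral_mono_on ht.1 hkf hkG fun s hs =>
          mul_le_mul_of_nonneg_left (ih s (hsub hs)) (hk s (hsub hs))
      _ = gronwallIterate A M (n + 1) (B * W t) :=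
        add_mul_integral_mul_gronwallIterate ht.1 hkt (hWc.mono hsub) hW0
          (fun s hs => hWk s (Ioo_subset_Ioo_right ht.2 hs)) n

theorem le_mul_exp_of_le_add_mul_integral (hA : 0 ≤ A)
    (hk : ∀ s ∈ Icc 0 T, 0 ≤ k s) (hki : IntervalIntegrable k volume 0 T)
    (hWc : ContinuousOn W (Icc 0 T)) (hW0 : W 0 = 0) (hWk : ∀ s ∈ Ioo 0 T, HasDerivAt W (k s) s)
    (hB : 0 ≤ B) (hf : Measurable f) (hf0 : ∀ t ∈ Icc 0 T, 0 ≤ f t)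
    (hfM : ∀ t ∈ Icc 0 T, f t ≤ M)
    (hineq : ∀ t ∈ Icc 0 T, f t ≤ A + B * ∫ s in (0)..t, k s * f s) :
    ∀ t ∈ Icc 0 T, f t ≤ A * exp (B * W t) := fun t ht =>
  ge_of_tendsto (tendsto_gronwallIterate A M _) (Eventually.of_forall fun n =>
    le_gronwallIterate hA hk hki hWc hW0 hWk hB hf hf0 hfM hineq n t ht)

end KernelGronwall

theorem hasDerivAt_two_mul_sqrt_sub_two_mul_sqrt_sub {T s : ℝ} (hs : s < T) :
    HasDerivAt (fun t => 2 * √T - 2 * √(T - t)) ((T - s) ^ (-(1 : ℝ) / 2)) s := by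
  have hTs : 0 < T - s := sub_pos.2 hs
  have h := (((hasDerivAt_id s).const_sub T).sqrt hTs.ne').const_mul 2 |>.const_sub (2 * √T)
  refine h.congr_deriv ?_
  rw [show (-1 : ℝ) / 2 = -(1 / 2) by norm_num, rpow_neg hTs.le, ← sqrt_eq_rpow, id]
  field_simp

theorem intervalIntegrable_sub_rpow_neg_half (T : ℝ) :
    IntervalIntegrable (fun s => (T - s) ^ (-(1 : ℝ) / 2)) volume 0 T := by
  simpa using (intervalIntegrable_rpow' (a := T - 0) (b := T - T) (by norm_num)).comp_sub_left T

theorem stmt10_general (T A B : ℝ) (hA : 0 ≤ A) (hB : 0 ≤ B)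
    (f : ℝ → ℝ) (hmeas : Measurable f)
    (hnn : ∀ t ∈ Set.Icc 0 T, 0 ≤ f t)
    (hbdd : ∃ M, ∀ t ∈ Set.Icc 0 T, f t ≤ M)
    (hineq : ∀ t ∈ Set.Icc 0 T,
      f t ≤ A + B * ∫ s in (0 : ℝ)..t, (T - s) ^ (-(1 : ℝ) / 2) * f s) :
    ∀ t ∈ Set.Icc 0 T, f t ≤ A * Real.exp (2 * B * Real.sqrt T) := by
  obtain ⟨M, hM⟩ := hbdd
  intro t ht
  calc f t ≤ A * exp (B * (2 * √T - 2 * √(T - t))) :=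
        le_mul_exp_of_le_add_mul_integral hA (fun s hs => rpow_nonneg (sub_nonneg.2 hs.2) _)
          (intervalIntegrable_sub_rpow_neg_half T) (by fun_prop) (by simp)
          (fun s hs => hasDerivAt_two_mul_sqrt_sub_two_mul_sqrt_sub hs.2) hB hmeas hnn hM hineq t ht
    _ ≤ A * exp (2 * B * √T) := by
        gcongr A * exp ?_
        nlinarith [mul_nonneg hB (sqrt_nonneg (T - t))]

theorem stmt10 (T A B : ℝ) (hT : 0 ≤ T) (hA : 0 ≤ A) (hB : 0 ≤ B)
    (f : ℝ → ℝ) (hmeas : Measurable f)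
    (hnn : ∀ t ∈ Set.Icc 0 T, 0 ≤ f t)
    (hbdd : ∃ M, ∀ t ∈ Set.Icc 0 T, f t ≤ M)
    (hineq : ∀ t ∈ Set.Icc 0 T,
      f t ≤ A + B * ∫ s in (0 : ℝ)..t, (T - s) ^ (-(1 : ℝ) / 2) * f s) :
    ∀ t ∈ Set.Icc 0 T, f t ≤ A * Real.exp (2 * B * Real.sqrt T) :=
  stmt10_general T A B hA hB f hmeas hnn hbdd hineq
end

section
/- Let j ≥ 1, C_j := e^{j−1}, and define h : ℝ₊ → ℝ₊ by h(r) := (ln(C_j + r))^j. Then h is concave on ℝ₊. -/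
/-!
Write `h(r) = g(C + r)` with `g(x) = (ln x)^j`, so it suffices that `g` is concave on
`[e^{j-1}, ∞)`. With `L = ln x`, one computes `x² g''(x) = j L^{j-2} (j - 1 - L)`,
which is nonpositive when `L ≥ j - 1`, i.e. `x ≥ e^{j-1} = C`.
-/

open Real Set

lemma hasDerivAt_log_rpow {x p : ℝ} (hx : x ≠ 0) (h : log x ≠ 0 ∨ 1 ≤ p) :
    HasDerivAt (fun x => log x ^ p) (p * log x ^ (p - 1) / x) x := by
  simpa [Function.comp_def, div_eq_mul_inv, mul_assoc] using
    (hasDerivAt_rpow_const (p := p) h).comp x (hasDerivAt_log hx)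

lemma hasDerivAt_log_rpow_div {x q : ℝ} (hx : x ≠ 0) (h : log x ≠ 0 ∨ 1 ≤ q) :
    HasDerivAt (fun x => log x ^ q / x) ((q * log x ^ (q - 1) - log x ^ q) / x ^ 2) x := by
  refine ((hasDerivAt_log_rpow hx h).div (hasDerivAt_id' x) hx).congr_deriv ?_
  field_simp

lemma mul_rpow_sub_one_le_rpow {L q : ℝ} (hL : 0 < L) (hq : q ≤ L) :
    q * L ^ (q - 1) ≤ L ^ q := by
  calc q * L ^ (q - 1) ≤ L * L ^ (q - 1) := by gcongr
    _ = L ^ q := by rw [rpow_sub_one hL.ne', mul_div_cancel₀ _ hL.ne']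

lemma concaveOn_log_rpow {p : ℝ} (hp : 1 ≤ p) :
    ConcaveOn ℝ (Ici (exp (p - 1))) (fun x => log x ^ p) := by
  have hlog : ∀ x ∈ Ioi (exp (p - 1)), p - 1 < log x := fun x hx =>
    (lt_log_iff_exp_lt (exp_pos _ |>.trans hx)).2 hx
  have hpos : ∀ x ∈ Ioi (exp (p - 1)), 0 < x := fun x hx => (exp_pos _).trans hx
  refine concaveOn_of_hasDerivWithinAt2_nonpos (convex_Ici _)
    (f' := fun x => p * (log x ^ (p - 1) / x))
    (f'' := fun x => p * (((p - 1) * log x ^ (p - 1 - 1) - log x ^ (p - 1)) / x ^ 2))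
    ?_ ?_ ?_ ?_
  · refine ContinuousOn.rpow_const (continuousOn_log.mono fun x hx => ?_) fun _ _ => Or.inr ?_
    · exact (exp_pos _).trans_le hx |>.ne'
    · linarith
  · rw [interior_Ici]
    intro x hx
    rw [← mul_div_assoc]
    exact (hasDerivAt_log_rpow (hpos x hx).ne' (Or.inr hp)).hasDerivWithinAt
  · rw [interior_Ici]
    intro x hx
    exact ((hasDerivAt_log_rpow_div (hpos x hx).ne'
      (Or.inl (by linarith [hlog x hx]))).const_mul p).hasDerivWithinAt
  · rw [interior_Ici]
    intro x hx
    have hle := mul_rpow_sub_one_le_rpow (by linarith [hlog x hx]) (hlog x hx).le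
    exact mul_nonpos_of_nonneg_of_nonpos (by linarith)
      (div_nonpos_of_nonpos_of_nonneg (by linarith) (sq_nonneg x))

theorem stmt11 (j : ℝ) (hj : 1 ≤ j) :
    ConcaveOn ℝ (Set.Ici 0) (fun r : ℝ => Real.log (Real.exp (j - 1) + r) ^ j) := by
  have h := (concaveOn_log_rpow hj).translate_right (exp (j - 1))
  have hpre : (fun r => exp (j - 1) + r) ⁻¹' Ici (exp (j - 1)) = Ici 0 := by ext; simp
  rwa [hpre] at h
end

section
/- Let ξ be a nonnegative random variable and j ≥ 1. Suppose E[e^ξ] ≤ M for some M ≥ 1. Then E[ξ^j] ≤ (ln(e^{j−1} + M))^j. -/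
/-!
Since `ξ = log (exp ξ) ≤ log (c + exp ξ)` with `c = exp (j - 1)`, we have
`ξ ^ j ≤ g (exp ξ)` for `g r = log (c + r) ^ j`, and Jensen's inequality gives
`E[g (exp ξ)] ≤ g (E[exp ξ]) ≤ g M`. The shift by `c` is what makes `g` concave on `[0, ∞)`:
writing `L = log (c + r)`, we get `g' r = j * L ^ (j - 1) * exp (-L)`, and `L ↦ L ^ (j - 1) * exp (-L)`
is decreasing once `L ≥ j - 1`, which `c` guarantees.
-/

open MeasureTheory Real Set

lemma antitoneOn_rpow_mul_exp_neg {k : ℝ} (hk : 0 ≤ k) :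
    AntitoneOn (fun u : ℝ => u ^ k * exp (-u)) (Ici k) := by
  intro u (hu : k ≤ u) v _ huv
  obtain rfl | hu0 := (hk.trans hu).eq_or_lt
  · obtain rfl : k = 0 := le_antisymm hu hk
    simpa using (neg_nonpos.mpr (hk.trans huv))
  have hratio : (v / u) ^ k ≤ exp (v - u) :=
    calc (v / u) ^ k ≤ exp (v / u - 1) ^ k := by
          gcongr
          · exact div_nonneg (hu0.le.trans huv) hu0.le
          · linarith [add_one_le_exp (v / u - 1)]
      _ = exp (k * (v / u - 1)) := by rw [← exp_mul, mul_comm]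
      _ ≤ exp (v - u) := by
          gcongr
          calc k * (v / u - 1) ≤ u * (v / u - 1) := by
                gcongr
                rw [sub_nonneg, le_div_iff₀ hu0, one_mul]
                exact huv
            _ = v - u := by field_simp
  calc v ^ k * exp (-v) = u ^ k * (v / u) ^ k * exp (-v) := by
        rw [div_rpow (hu0.le.trans huv) hu0.le, mul_div_cancel₀ _ (by positivity)]
    _ ≤ u ^ k * exp (v - u) * exp (-v) := by gcongr
    _ = u ^ k * exp (-u) := by rw [mul_assoc, ← exp_add]; ring_nf

lemma continuousOn_log_add_rpow {j c : ℝ} (hj : 0 ≤ j) (hc : 0 < c) :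
    ContinuousOn (fun r => log (c + r) ^ j) (Ici 0) :=
  ContinuousOn.rpow_const (by fun_prop (disch := intro r (hr : 0 ≤ r); linarith))
    fun _ _ => Or.inr hj

lemma concaveOn_log_add_rpow {j c : ℝ} (hj : 1 ≤ j) (hc : exp (j - 1) ≤ c) :
    ConcaveOn ℝ (Ici 0) fun r => log (c + r) ^ j := by
  have hc1 : 1 ≤ c := (one_le_exp (by linarith)).trans hc
  have hlog_ge : ∀ r ∈ Ici (0 : ℝ), j - 1 ≤ log (c + r) := fun r (hr : 0 ≤ r) => by
    rw [le_log_iff_exp_le (by linarith)]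
    linarith
  have hderiv : ∀ r ∈ Ioi (0 : ℝ), HasDerivAt (fun r => log (c + r) ^ j)
      (j * (log (c + r) ^ (j - 1) * exp (-log (c + r)))) r := fun r (hr : 0 < r) => by
    refine ((((hasDerivAt_id' r).const_add c).log (by linarith)).rpow_const
      (Or.inl (log_pos (by linarith)).ne')).congr_deriv ?_
    rw [exp_neg, exp_log (by linarith)]
    ring
  refine AntitoneOn.concaveOn_of_deriv (convex_Ici 0) ?_ ?_ ?_
  · exact continuousOn_log_add_rpow (by linarith) (by linarith)
  · rw [interior_Ici]
    exact fun r hr => (hderiv r hr).differentiableAt.differentiableWithinAt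
  · rw [interior_Ici]
    intro a (ha : 0 < a) b (hb : 0 < b) hab
    rw [(hderiv a ha).deriv, (hderiv b hb).deriv]
    gcongr j * ?_
    exact antitoneOn_rpow_mul_exp_neg (by linarith) (hlog_ge a ha.le) (hlog_ge b hb.le)
      (log_le_log (by linarith) (by linarith))

lemma ConcaveOn.le_mul_of_one_le {f : ℝ → ℝ} (hf : ConcaveOn ℝ (Ici 0) f) (h0 : 0 ≤ f 0)
    {r : ℝ} (hr : 1 ≤ r) : f r ≤ f 1 * r := by
  have hr0 : 0 < r := one_pos.trans_le hr
  have h := hf.2 (self_mem_Ici : (0 : ℝ) ∈ Ici 0) (hr0.le : r ∈ Ici 0)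
    (sub_nonneg.mpr (inv_le_one_of_one_le₀ hr)) (inv_nonneg.mpr hr0.le) (sub_add_cancel 1 r⁻¹)
  simp only [smul_eq_mul, mul_zero, zero_add, inv_mul_cancel₀ hr0.ne'] at h
  have : 0 ≤ (1 - r⁻¹) * f 0 := mul_nonneg (sub_nonneg.mpr (inv_le_one_of_one_le₀ hr)) h0
  calc f r = r * (r⁻¹ * f r) := by field_simp
    _ ≤ r * f 1 := by gcongr; linarith
    _ = f 1 * r := mul_comm _ _

lemma ConcaveOn.integrable_comp {Ω : Type*} [MeasurableSpace Ω] {μ : Measure Ω} {g : ℝ → ℝ}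
    {f : Ω → ℝ} (hg : ConcaveOn ℝ (Ici 0) g) (hg_nonneg : ∀ r ∈ Ici (0 : ℝ), 0 ≤ g r)
    (hgm : Measurable g) (hf : Integrable f μ) (hf_one : ∀ᵐ ω ∂μ, 1 ≤ f ω) :
    Integrable (g ∘ f) μ := by
  refine (hf.const_mul (g 1)).mono'
    (hgm.comp_aemeasurable hf.aemeasurable).aestronglyMeasurable ?_
  filter_upwards [hf_one] with ω hω
  rw [Function.comp_apply, norm_of_nonneg (hg_nonneg _ (zero_le_one.trans hω))]
  exact hg.le_mul_of_one_le (hg_nonneg 0 self_mem_Ici) hω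

lemma rpow_le_log_add_exp_rpow {x c j : ℝ} (hx : 0 ≤ x) (hc : 0 ≤ c) (hj : 0 ≤ j) :
    x ^ j ≤ log (c + exp x) ^ j := by
  gcongr
  rw [le_log_iff_exp_le (by positivity)]
  linarith

theorem stmt12_general {Ω : Type*} [MeasurableSpace Ω] (P : Measure Ω) [IsProbabilityMeasure P]
    (ξ : Ω → ℝ) (hnn : ∀ ω, 0 ≤ ξ ω)
    (j M : ℝ) (hj : 1 ≤ j)
    (hint : Integrable (fun ω => Real.exp (ξ ω)) P)
    (hbd : ∫ ω, Real.exp (ξ ω) ∂P ≤ M) :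
    ∫ ω, ξ ω ^ j ∂P ≤ Real.log (Real.exp (j - 1) + M) ^ j := by
  have hc : 1 ≤ exp (j - 1) := one_le_exp (by linarith)
  have hconc := concaveOn_log_add_rpow hj le_rfl
  have hcont := continuousOn_log_add_rpow (by linarith : 0 ≤ j) (exp_pos (j - 1))
  have hg_int : Integrable (fun ω => log (exp (j - 1) + exp (ξ ω)) ^ j) P :=
    hconc.integrable_comp (fun r (hr : 0 ≤ r) => rpow_nonneg (log_nonneg (by linarith)) j)
      (by fun_prop) hint (ae_of_all _ fun ω => one_le_exp (hnn ω))
  have hmean_nonneg : 0 ≤ ∫ ω, exp (ξ ω) ∂P := integral_nonneg fun ω => (exp_pos _).le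
  calc ∫ ω, ξ ω ^ j ∂P ≤ ∫ ω, log (exp (j - 1) + exp (ξ ω)) ^ j ∂P :=
        integral_mono_of_nonneg (ae_of_all _ fun ω => rpow_nonneg (hnn ω) j) hg_int
          (ae_of_all _ fun ω => rpow_le_log_add_exp_rpow (hnn ω) (by linarith) (by linarith))
    _ ≤ log (exp (j - 1) + ∫ ω, exp (ξ ω) ∂P) ^ j :=
        hconc.le_map_integral hcont isClosed_Ici (ae_of_all _ fun ω => (exp_pos _).le) hint hg_int
    _ ≤ log (exp (j - 1) + M) ^ j := by
        gcongr
        exact log_nonneg (by linarith)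

theorem stmt12 {Ω : Type*} [MeasurableSpace Ω] (P : Measure Ω) [IsProbabilityMeasure P]
    (ξ : Ω → ℝ) (hmeas : Measurable ξ) (hnn : ∀ ω, 0 ≤ ξ ω)
    (j M : ℝ) (hj : 1 ≤ j) (hM : 1 ≤ M)
    (hint : Integrable (fun ω => Real.exp (ξ ω)) P)
    (hbd : ∫ ω, Real.exp (ξ ω) ∂P ≤ M) :
    ∫ ω, ξ ω ^ j ∂P ≤ Real.log (Real.exp (j - 1) + M) ^ j :=
  stmt12_general P ξ hnn j M hj hint hbd
end
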